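/- Let p, r ≥ 1 and q ≥ 0 be integers, and define f(x) = −((p+q)r)^{−1}·ln(1 − (I_x(q+1, p))^r). Then, as x → 0 from the right, f(x) = ((p+q)r)^{−1}·C(p+q, q+1)^r·x^{r(q+1)} + O(x^{r(q+1)+1}); that is, the function x ↦ f(x) − ((p+q)r)^{−1}·C(p+q, q+1)^r·x^{r(q+1)} is O(x^{r(q+1)+1}) as x → 0⁺, where C(p+q, q+1) denotes the binomial coefficient. -/

import Mathlib

/-- The regularized incomplete Beta function `I_x(a, b)` for positive integer
parameters `a, b`. -/
noncomputable def regIncBeta (a b : ℕ) (x : ℝ) : ℝ :=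
  (∫ t in (0:ℝ)..1, t ^ (a - 1) * (1 - t) ^ (b - 1))⁻¹ *
    ∫ t in (0:ℝ)..x, t ^ (a - 1) * (1 - t) ^ (b - 1)

/-!
Near `0` the integrand `t ^ q * (1 - t) ^ (p - 1)` of the incomplete Beta integral is `t ^ q`
up to `O(t ^ (q + 1))`, and `B(q + 1, p) = q! (p - 1)! / (p + q)!`, so
`I_x(q + 1, p) = C(p + q, q + 1) x ^ (q + 1) + O(x ^ (q + 2))`. Raising to the `r`-th power
gives `y := I_x(q + 1, p) ^ r = C(p + q, q + 1) ^ r x ^ (r (q + 1)) + O(x ^ (r (q + 1) + 1))`,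
and `-log (1 - y) = y + O(y ^ 2)` with `y ^ 2 = O(x ^ (2 r (q + 1)))` already small enough.
-/

open Asymptotics Filter Topology Finset
open scoped Nat

theorem Asymptotics.isBigO_pow_pow_of_le {𝕜 : Type*} [NormedDivisionRing 𝕜]
    {m n : ℕ} (h : n ≤ m) : (fun x : 𝕜 => x ^ m) =O[𝓝 0] fun x => x ^ n := by
  obtain ⟨k, rfl⟩ := Nat.exists_eq_add_of_le h
  have hk : (fun x : 𝕜 => x ^ k) =O[𝓝 0] fun _ => (1 : 𝕜) :=
    ((continuous_pow k).tendsto 0).isBigO_one 𝕜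
  simpa only [pow_add, mul_one] using (isBigO_refl (fun x : 𝕜 => x ^ n) _).mul hk

theorem Asymptotics.IsBigO.pow_succ_sub_pow_succ {α R 𝕜 : Type*} [SeminormedCommRing R]
    [NormedField 𝕜] {l : Filter α} {f g : α → R} {u v : α → 𝕜}
    (hf : f =O[l] u) (hg : g =O[l] u) (hfg : (fun x => f x - g x) =O[l] v) (n : ℕ) :
    (fun x => f x ^ (n + 1) - g x ^ (n + 1)) =O[l] fun x => u x ^ n * v x := by
  have hsum : (fun x => ∑ i ∈ range (n + 1), f x ^ i * g x ^ (n + 1 - 1 - i)) =O[l]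
      fun x => u x ^ n := by
    refine IsBigO.fun_sum fun i hi => ?_
    have hin : i + (n + 1 - 1 - i) = n := by have := mem_range.1 hi; omega
    simpa only [← pow_add, hin] using (hf.pow i).mul (hg.pow (n + 1 - 1 - i))
  simpa only [geom_sum₂_mul] using hsum.mul hfg

theorem Real.log_one_sub_add_self_isBigO :
    (fun y : ℝ => Real.log (1 - y) + y) =O[𝓝 0] fun y => y ^ 2 := by
  refine isBigO_iff.2 ⟨2, ?_⟩
  filter_upwards [eventually_abs_sub_lt 0 (by norm_num : (0:ℝ) < 1 / 2)] with y hy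
  rw [sub_zero] at hy
  have hbound := Real.abs_log_sub_add_sum_range_le (hy.trans (by norm_num)) 1
  simp only [range_one, sum_singleton, zero_add, pow_one, Nat.cast_zero, div_one] at hbound
  rw [Real.norm_eq_abs, Real.norm_eq_abs, abs_pow, add_comm]
  calc |y + Real.log (1 - y)| ≤ |y| ^ 2 / (1 - |y|) := hbound
    _ ≤ |y| ^ 2 / (1 / 2) := by gcongr; linarith
    _ = 2 * |y| ^ 2 := by ring

theorem integral_pow_mul_one_sub_pow (a b : ℕ) :
    ∫ t in (0:ℝ)..1, t ^ a * (1 - t) ^ b = a ! * b ! / (a + b + 1)! := by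
  have hbeta : Complex.betaIntegral (a + 1) (b + 1)
      = ((∫ t in (0:ℝ)..1, t ^ a * (1 - t) ^ b : ℝ) : ℂ) := by
    rw [Complex.betaIntegral, ← intervalIntegral.integral_ofReal]
    refine intervalIntegral.integral_congr fun t _ => ?_
    simp only [add_sub_cancel_right, Complex.cpow_natCast]
    push_cast; rfl
  have hgamma := Complex.Gamma_mul_Gamma_eq_betaIntegral (s := a + 1) (t := b + 1)
    (by simp; positivity) (by simp; positivity)
  rw [hbeta, show (a : ℂ) + 1 + (b + 1) = ((a + b + 1 : ℕ) : ℂ) + 1 by push_cast; ring,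
    Complex.Gamma_nat_eq_factorial, Complex.Gamma_nat_eq_factorial,
    Complex.Gamma_nat_eq_factorial] at hgamma
  have hfac : ((a + b + 1)! : ℂ) ≠ 0 := by exact_mod_cast Nat.factorial_ne_zero _
  have hC : ((∫ t in (0:ℝ)..1, t ^ a * (1 - t) ^ b : ℝ) : ℂ)
      = ((a ! * b ! / (a + b + 1)! : ℝ) : ℂ) := by
    push_cast
    rw [eq_div_iff hfac, hgamma, mul_comm]
  exact_mod_cast hC

theorem abs_pow_mul_one_sub_pow_sub_pow_le {t : ℝ} (ht₀ : 0 ≤ t) (ht₁ : t ≤ 1)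
    (a b : ℕ) :
    |t ^ a * (1 - t) ^ b - t ^ a| ≤ b * t ^ (a + 1) := by
  have hle : (1 - t) ^ b ≤ 1 := pow_le_one₀ (by linarith) (by linarith)
  have hbernoulli : 1 - b * t ≤ (1 - t) ^ b := by
    simpa [sub_eq_add_neg] using one_add_mul_le_pow (a := -t) (by linarith) b
  rw [abs_sub_comm, abs_of_nonneg (by nlinarith [pow_nonneg ht₀ a]), pow_succ]
  nlinarith [pow_nonneg ht₀ a]

theorem integral_pow_mul_one_sub_pow_sub_isBigO (a b : ℕ) :
    (fun x : ℝ => (∫ t in (0:ℝ)..x, t ^ a * (1 - t) ^ b) - x ^ (a + 1) / (a + 1))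
      =O[𝓝[>] 0] fun x => x ^ (a + 2) := by
  refine isBigO_iff.2 ⟨b, ?_⟩
  filter_upwards [Ioo_mem_nhdsGT (zero_lt_one' ℝ)] with x ⟨hx₀, hx₁⟩
  have hsub : (∫ t in (0:ℝ)..x, t ^ a * (1 - t) ^ b) - x ^ (a + 1) / (a + 1)
      = ∫ t in (0:ℝ)..x, (t ^ a * (1 - t) ^ b - t ^ a) := by
    rw [intervalIntegral.integral_sub (Continuous.intervalIntegrable (by fun_prop) _ _)
      ((continuous_pow a).intervalIntegrable _ _), integral_pow]
    norm_num
  have hbound : ∀ t ∈ Set.uIoc 0 x, ‖t ^ a * (1 - t) ^ b - t ^ a‖ ≤ b * x ^ (a + 1) := by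
    rintro t ⟨ht₀, htx⟩
    rw [min_eq_left hx₀.le] at ht₀
    rw [max_eq_right hx₀.le] at htx
    calc ‖t ^ a * (1 - t) ^ b - t ^ a‖ ≤ b * t ^ (a + 1) :=
          abs_pow_mul_one_sub_pow_sub_pow_le ht₀.le (htx.trans hx₁.le) a b
      _ ≤ b * x ^ (a + 1) := by gcongr
  rw [hsub, Real.norm_of_nonneg (by positivity : (0:ℝ) ≤ x ^ (a + 2))]
  calc _ ≤ b * x ^ (a + 1) * |x - 0| := intervalIntegral.norm_integral_le_of_norm_le_const hbound
    _ = b * x ^ (a + 2) := by rw [sub_zero, abs_of_pos hx₀]; ring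

theorem cast_choose_eq_inv_integral (b q : ℕ) :
    ((b + 1 + q).choose (q + 1) : ℝ)
      = (∫ t in (0:ℝ)..1, t ^ q * (1 - t) ^ b)⁻¹ / (q + 1) := by
  have h := Nat.add_choose_mul_factorial_mul_factorial b (q + 1)
  rw [integral_pow_mul_one_sub_pow, show b + 1 + q = b + (q + 1) by ring,
    show q + b + 1 = b + (q + 1) by ring, ← h]
  push_cast [Nat.factorial_succ]
  have := Nat.factorial_pos q
  have := Nat.factorial_pos b
  field_simp

theorem regIncBeta_sub_isBigO {p q : ℕ} (hp : 1 ≤ p) :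
    (fun x => regIncBeta (q + 1) p x - (p + q).choose (q + 1) * x ^ (q + 1))
      =O[𝓝[>] 0] fun x => x ^ (q + 2) := by
  obtain ⟨b, rfl⟩ : ∃ b, p = b + 1 := ⟨p - 1, by omega⟩
  have hrw : (fun x => regIncBeta (q + 1) (b + 1) x - (b + 1 + q).choose (q + 1) * x ^ (q + 1))
      = fun x => (∫ t in (0:ℝ)..1, t ^ q * (1 - t) ^ b)⁻¹ *
          ((∫ t in (0:ℝ)..x, t ^ q * (1 - t) ^ b) - x ^ (q + 1) / (q + 1)) := by
    funext x
    rw [regIncBeta, cast_choose_eq_inv_integral]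
    simp only [add_tsub_cancel_right]
    ring
  rw [hrw]
  exact (integral_pow_mul_one_sub_pow_sub_isBigO q b).const_mul_left _

open Asymptotics Filter in
theorem stmt3 (p q r : ℕ) (hp : 1 ≤ p) (hr : 1 ≤ r) :
    (fun x : ℝ =>
        -(((p + q) * r : ℝ))⁻¹ * Real.log (1 - (regIncBeta (q + 1) p x) ^ r) -
          (((p + q) * r : ℝ))⁻¹ * (Nat.choose (p + q) (q + 1) : ℝ) ^ r *
            x ^ (r * (q + 1)))
      =O[nhdsWithin (0 : ℝ) (Set.Ioi 0)]
        fun x : ℝ => x ^ (r * (q + 1) + 1) := by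
  obtain ⟨n, rfl⟩ : ∃ n, r = n + 1 := ⟨r - 1, by omega⟩
  have hI := regIncBeta_sub_isBigO (q := q) hp
  set I := regIncBeta (q + 1) p
  set c : ℝ := ((Nat.choose (p + q) (q + 1) : ℕ) : ℝ)
  have hcx : (fun x : ℝ => c * x ^ (q + 1)) =O[𝓝[>] 0] fun x => x ^ (q + 1) :=
    (isBigO_refl _ _).const_mul_left c
  have hI_isBigO : I =O[𝓝[>] 0] fun x => x ^ (q + 1) := by
    have hpow := (isBigO_pow_pow_of_le (𝕜 := ℝ) (by omega : q + 1 ≤ q + 2)).mono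
      (nhdsWithin_le_nhds (s := Set.Ioi 0))
    simpa using (hI.trans hpow).add hcx
  have hy : (fun x => I x ^ (n + 1) - c ^ (n + 1) * x ^ ((n + 1) * (q + 1)))
      =O[𝓝[>] 0] fun x => x ^ ((n + 1) * (q + 1) + 1) := by
    refine (hI_isBigO.pow_succ_sub_pow_succ hcx hI n).congr (fun x => ?_) (fun x => ?_) <;> ring
  have hy_tendsto : Tendsto (fun x => I x ^ (n + 1)) (𝓝[>] 0) (𝓝 0) := by
    have hx : Tendsto (fun x : ℝ => x ^ (q + 1)) (𝓝[>] 0) (𝓝 0) :=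
      ((continuous_pow (q + 1)).tendsto' 0 0 (by simp)).mono_left nhdsWithin_le_nhds
    simpa using (hI_isBigO.trans_tendsto hx).pow (n + 1)
  have hlog := Real.log_one_sub_add_self_isBigO.comp_tendsto hy_tendsto
  have hy_sq : (fun x => (I x ^ (n + 1)) ^ 2) =O[𝓝[>] 0]
      fun x => x ^ ((n + 1) * (q + 1) + 1) := by
    have hle : (n + 1) * (q + 1) + 1 ≤ (q + 1) * (n + 1) * 2 := by nlinarith
    have h := (hI_isBigO.pow (n + 1)).pow 2
    simp only [← pow_mul] at h ⊢
    exact h.trans ((isBigO_pow_pow_of_le hle).mono nhdsWithin_le_nhds)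
  set k : ℝ := ((p + q) * (n + 1 : ℕ) : ℝ)⁻¹
  refine (((hlog.trans hy_sq).const_mul_left (-k)).add (hy.const_mul_left k)).congr_left
    fun x => ?_
  simp only [Function.comp]
  ring
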